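/- arXiv:1811.01427 — 6 statements merged into one kernel-verified Lean document; each statement's English description precedes it below -/
import Mathlib

section
/- Every monotone (nondecreasing with respect to the coordinatewise order) function f : ℝ^d → {0,1} is Lebesgue measurable; equivalently, the upper set {x ∈ ℝ^d : f(x) = 1} is a Lebesgue measurable subset of ℝ^d. -/
/-- Every monotone Boolean function on `ℝ^d` is Lebesgue measurable: its upper
set `{x : f x = 1}` is a (null-)measurable subset of `ℝ^d`. -/
theorem stmt_6 (d : ℕ) (f : (Fin d → ℝ) → Bool)
    (hf : ∀ x y : Fin d → ℝ, x ≤ y → f x = true → f y = true) :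
    MeasureTheory.NullMeasurableSet {x : Fin d → ℝ | f x = true}
      MeasureTheory.volume := by
  have hupper : IsUpperSet {x | f x = true} := fun x y hxy hx => hf x y hxy hx
  exact hupper.ordConnected.nullMeasurableSet
end

section
/- Define Centrist : [0,1]^d → {0,1} by Centrist(x) = 1 iff there exists i with x_i ∈ (1 - 2/d, 1 - 1/d]. Let T = T₁ × ⋯ × T_d where each T_i consists of 2 i.i.d. uniform samples from [0,1]. Condition on the event that for every i, at most one of the two points of T_i lies in (1 - 2/d, 1]. Then the restriction of Centrist to T (viewed as a function on {0,1}^d via the order on each T_i) is monotone. -/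
lemma Bool.eq_of_le_of_lt_apply {f : Bool → ℝ} {a : ℝ} (hf : f false ≤ f true)
    (hnot : ¬ (a < f false ∧ a < f true)) {b c : Bool} (hbc : b ≤ c) (hb : a < f b) : b = c := by
  cases b <;> cases c
  · rfl
  · exact absurd ⟨hb, hb.trans_le hf⟩ hnot
  · exact absurd hbc (by decide)
  · rfl

theorem stmt_9_general (d : ℕ) (g : Fin d → Bool → ℝ)
    (horder : ∀ i, g i false ≤ g i true)
    (hcond : ∀ i, ¬ (1 - 2/(d:ℝ) < g i false ∧ 1 - 2/(d:ℝ) < g i true)) :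
    ∀ y z : Fin d → Bool, y ≤ z →
      (∃ i, 1 - 2/(d:ℝ) < g i (y i) ∧ g i (y i) ≤ 1 - 1/(d:ℝ)) →
      (∃ i, 1 - 2/(d:ℝ) < g i (z i) ∧ g i (z i) ≤ 1 - 1/(d:ℝ)) := by
  rintro y z hyz ⟨i, hsupporter⟩
  have hyz_i : y i = z i := Bool.eq_of_le_of_lt_apply (horder i) (hcond i) (hyz i) hsupporter.1
  exact ⟨i, hyz_i ▸ hsupporter⟩

/-- Restriction of the `Centrist` function to a sampled sub-hypercube is
monotone, conditioned on each coordinate having at most one non-skeptic sample.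
Here `g i false ≤ g i true` are the two sampled points of `T_i` in `[0,1]`, and
`Centrist(x) = 1` iff some coordinate lies in `(1-2/d, 1-1/d]`. -/
theorem stmt_9 (d : ℕ) (hd : 0 < d) (g : Fin d → Bool → ℝ)
    (hrange : ∀ i s, g i s ∈ Set.Icc (0:ℝ) 1)
    (horder : ∀ i, g i false ≤ g i true)
    (hcond : ∀ i, ¬ (1 - 2/(d:ℝ) < g i false ∧ 1 - 2/(d:ℝ) < g i true)) :
    ∀ y z : Fin d → Bool, y ≤ z →
      (∃ i, 1 - 2/(d:ℝ) < g i (y i) ∧ g i (y i) ≤ 1 - 1/(d:ℝ)) →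
      (∃ i, 1 - 2/(d:ℝ) < g i (z i) ∧ g i (z i) ≤ 1 - 1/(d:ℝ)) :=
  stmt_9_general d g horder hcond
end

section
/- Define Centrist : [0,1]^d → {0,1} by Centrist(x) = 1 iff there exists i with x_i ∈ (1 - 2/d, 1 - 1/d]. For each i, let S_i be the event (subset of [0,1]^d) that x_i ∈ (1-2/d, 1-1/d] and x_j ≤ 1-2/d for all j ≠ i, and let F_i be the event that x_i ∈ (1-1/d, 1] and x_j ≤ 1-2/d for all j ≠ i. Then (a) the sets S₁,…,S_d,F₁,…,F_d are pairwise disjoint; (b) the map M(x) = x + e_i/d is a measure-preserving bijection from S_i to F_i; (c) Centrist = 1 on each S_i and Centrist = 0 on each F_i; (d) under the uniform (Lebesgue) measure on [0,1]^d, the measure of ⋃_i S_i equals (1 - 2/d)^{d-1}, which is at least e^{-2}·(1 - 2/d)^{-1} ≥ 1/(2e²) for d ≥ 4. -/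
open MeasureTheory


private lemma exp_bound {x : ℝ} (hx1 : x < 1) :
    Real.exp (-(x/(1-x))) ≤ 1 - x := by
  have h1 : (0:ℝ) < 1 - x := by linarith
  have h := Real.add_one_le_exp (x/(1-x))
  have h2 : x/(1-x) + 1 = 1/(1-x) := by field_simp; ring
  rw [h2] at h
  rw [Real.exp_neg, inv_le_comm₀ (Real.exp_pos _) h1, ← one_div]
  linarith

private lemma key (d : ℕ) (hd : 4 ≤ d) :
    1 / (2 * Real.exp 1 ^ 2) ≤ (1 - 2/(d:ℝ))^(d-1) := by
  have he : (2:ℝ) < Real.exp 1 := by have := Real.exp_one_gt_d9; norm_num at this ⊢; linarith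
  have hepos := Real.exp_pos (1:ℝ)
  have hehalf : Real.exp (1/2 : ℝ) < 2 := by
    nlinarith [Real.exp_pos (1/2:ℝ), Real.exp_one_lt_d9,
      (by rw [← Real.exp_add]; norm_num : Real.exp ((1:ℝ)/2) * Real.exp (1/2) = Real.exp 1)]
  rcases le_or_gt 6 d with h6 | h6
  · have hd6 : (6:ℝ) ≤ d := by exact_mod_cast h6
    have hx1 : 2/(d:ℝ) < 1 := by rw [div_lt_one (by linarith)]; linarith
    have hb := exp_bound hx1
    have hmono : Real.exp (-(2/(d:ℝ)/(1-2/(d:ℝ))))^(d-1) ≤ (1 - 2/(d:ℝ))^(d-1) :=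
      pow_le_pow_left₀ (Real.exp_pos _).le hb _
    have hcast : ((d-1 : ℕ) : ℝ) = (d:ℝ) - 1 := by
      rw [Nat.cast_sub (by omega)]; norm_num
    have heq : Real.exp (-(2/(d:ℝ)/(1-2/(d:ℝ))))^(d-1)
        = Real.exp (((d-1:ℕ):ℝ) * (-(2/(d:ℝ)/(1-2/(d:ℝ))))) := by
      rw [Real.exp_nat_mul]
    have harg : Real.exp (-(5/2 : ℝ)) ≤ Real.exp (((d-1:ℕ):ℝ) * (-(2/(d:ℝ)/(1-2/(d:ℝ))))) := by
      apply Real.exp_le_exp.2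
      rw [hcast]
      have hd2 : (0:ℝ) < (d:ℝ) - 2 := by linarith
      have h3 : 2/(d:ℝ)/(1-2/(d:ℝ)) = 2/((d:ℝ)-2) := by
        field_simp
      rw [h3, mul_neg, neg_le_neg_iff, mul_comm, div_mul_eq_mul_div, div_le_iff₀ hd2]
      nlinarith
    have h52 : Real.exp (5/2:ℝ) = Real.exp (1/2) * Real.exp 1 ^ 2 := by
      rw [← Real.exp_nat_mul 1 2, ← Real.exp_add]; norm_num
    have hfin : 1 / (2 * Real.exp 1 ^ 2) ≤ Real.exp (-(5/2:ℝ)) := by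
      rw [Real.exp_neg, one_div, inv_le_inv₀ (by positivity) (Real.exp_pos _), h52]
      nlinarith [sq_nonneg (Real.exp 1), Real.exp_pos ((1:ℝ)/2)]
    calc 1 / (2 * Real.exp 1 ^ 2) ≤ Real.exp (-(5/2:ℝ)) := hfin
      _ ≤ Real.exp (-(2/(d:ℝ)/(1-2/(d:ℝ))))^(d-1) := by rw [heq]; exact harg
      _ ≤ _ := hmono
  · have h18 : 1 / (2 * Real.exp 1 ^ 2) ≤ 1/8 := by
      rw [div_le_div_iff₀ (by positivity) (by norm_num)]
      nlinarith
    interval_cases d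
    · exact h18.trans (by norm_num)
    · exact h18.trans (by norm_num)

/-- Properties of the `Centrist` lower-bound construction: the supporter events
`S i` and fanatic events `F i` are pairwise disjoint; translation by `e_i/d` is a
measure-preserving bijection from `S i` to `F i`; `Centrist = 1` on each `S i` and
`= 0` on each `F i`; and the union of the `S i` has measure `(1-2/d)^(d-1) ≥ 1/(2e²)`. -/
theorem stmt_10 (d : ℕ) (hd : 4 ≤ d)
    (S F : Fin d → Set (Fin d → ℝ))
    (hS : ∀ i, S i = {x | (1 - 2/(d:ℝ) < x i ∧ x i ≤ 1 - 1/(d:ℝ)) ∧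
      ∀ j, j ≠ i → 0 ≤ x j ∧ x j ≤ 1 - 2/(d:ℝ)})
    (hF : ∀ i, F i = {x | (1 - 1/(d:ℝ) < x i ∧ x i ≤ 1) ∧
      ∀ j, j ≠ i → 0 ≤ x j ∧ x j ≤ 1 - 2/(d:ℝ)}) :
    -- (a) pairwise disjointness
    (∀ i j, Disjoint (S i) (F j)) ∧
    (∀ i j, i ≠ j → Disjoint (S i) (S j)) ∧
    (∀ i j, i ≠ j → Disjoint (F i) (F j)) ∧
    -- (b) M(x) = x + e_i/d is a measure-preserving bijection from S i to F i
    (∀ i, Set.BijOn (fun x => Function.update x i (x i + 1/(d:ℝ))) (S i) (F i)) ∧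
    (∀ i, ∀ A : Set (Fin d → ℝ), A ⊆ S i → MeasurableSet A →
      volume ((fun x => Function.update x i (x i + 1/(d:ℝ))) '' A) = volume A) ∧
    -- (c) Centrist = 1 on S i and Centrist = 0 on F i
    (∀ i, ∀ x ∈ S i, ∃ j, 1 - 2/(d:ℝ) < x j ∧ x j ≤ 1 - 1/(d:ℝ)) ∧
    (∀ i, ∀ x ∈ F i, ¬ ∃ j, 1 - 2/(d:ℝ) < x j ∧ x j ≤ 1 - 1/(d:ℝ)) ∧
    -- (d) measure of the union
    volume (⋃ i, S i) = ENNReal.ofReal ((1 - 2/(d:ℝ))^(d-1)) ∧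
    1 / (2 * Real.exp 1 ^ 2) ≤ (1 - 2/(d:ℝ))^(d-1) := by
  have hd4 : (4:ℝ) ≤ d := by exact_mod_cast hd
  have hd0 : (0:ℝ) < d := by linarith
  have h1d : (0:ℝ) < 1/d := by positivity
  have h12 : (1:ℝ)/d < 2/d := by
    gcongr
    norm_num
  have h2d : (2:ℝ)/d = 1/d + 1/d := by ring
  have h2one : 2/(d:ℝ) ≤ 1 := by rw [div_le_one hd0]; linarith
  -- (a1)
  have ha1 : ∀ i j, Disjoint (S i) (F j) := by
    intro i j
    rw [Set.disjoint_left]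
    intro x hxS hxF
    rw [hS] at hxS; rw [hF] at hxF
    by_cases hij : i = j
    · subst hij; exact absurd hxF.1.1 (not_lt.2 (hxS.1.2.trans (by linarith)))
    · have h1 := (hxS.2 j (Ne.symm (by simpa using hij))).2
      have h2 := hxF.1.1
      linarith
  -- (a2)
  have ha2 : ∀ i j, i ≠ j → Disjoint (S i) (S j) := by
    intro i j hij
    rw [Set.disjoint_left]
    intro x hxi hxj
    rw [hS] at hxi hxj
    have h1 := (hxj.2 i hij).2
    have h2 := hxi.1.1
    linarith
  -- (a3)
  have ha3 : ∀ i j, i ≠ j → Disjoint (F i) (F j) := by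
    intro i j hij
    rw [Set.disjoint_left]
    intro x hxi hxj
    rw [hF] at hxi hxj
    have h1 := (hxj.2 i hij).2
    have h2 := hxi.1.1
    linarith
  -- (b1)
  have hb1 : ∀ i, Set.BijOn (fun x => Function.update x i (x i + 1/(d:ℝ))) (S i) (F i) := by
    intro i
    refine ⟨?_, ?_, ?_⟩
    · intro x hx
      rw [hS] at hx; rw [hF]
      obtain ⟨⟨hx1, hx2⟩, hx3⟩ := hx
      refine ⟨⟨?_, ?_⟩, fun j hj => ?_⟩
      · simp only [Function.update_self]; linarith
      · simp only [Function.update_self]; linarith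
      · simp only [Function.update_of_ne hj]; exact hx3 j hj
    · intro x _ y _ hxy
      funext j
      by_cases hj : j = i
      · subst hj
        have := congrFun hxy j
        simp only [Function.update_self] at this
        linarith
      · have := congrFun hxy j
        simpa [Function.update_of_ne hj] using this
    · intro y hy
      rw [hF] at hy
      obtain ⟨⟨hy1, hy2⟩, hy3⟩ := hy
      refine ⟨Function.update y i (y i - 1/(d:ℝ)), ?_, ?_⟩
      · rw [hS]
        refine ⟨⟨?_, ?_⟩, fun j hj => ?_⟩
        · simp only [Function.update_self]; linarith
        · simp only [Function.update_self]; linarith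
        · simp only [Function.update_of_ne hj]; exact hy3 j hj
      · simp only [Function.update_self, Function.update_idem]
        rw [sub_add_cancel, Function.update_eq_self]
  -- translation form
  have hfun : ∀ i : Fin d, (fun x : Fin d → ℝ => Function.update x i (x i + 1/(d:ℝ)))
      = (fun x => x + Pi.single i (1/(d:ℝ))) := by
    intro i
    funext x
    funext j
    by_cases h : j = i
    · subst h; simp
    · simp [Function.update_of_ne h, Pi.single_eq_of_ne h]
  -- (b2)
  have hb2 : ∀ i, ∀ A : Set (Fin d → ℝ), A ⊆ S i → MeasurableSet A →
      volume ((fun x => Function.update x i (x i + 1/(d:ℝ))) '' A) = volume A := by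
    intro i A _ _
    rw [hfun i, Set.image_add_right]
    exact measure_preimage_add_right volume _ A
  -- (c)
  have hc1 : ∀ i, ∀ x ∈ S i, ∃ j, 1 - 2/(d:ℝ) < x j ∧ x j ≤ 1 - 1/(d:ℝ) := by
    intro i x hx
    rw [hS] at hx
    exact ⟨i, hx.1⟩
  have hc2 : ∀ i, ∀ x ∈ F i, ¬ ∃ j, 1 - 2/(d:ℝ) < x j ∧ x j ≤ 1 - 1/(d:ℝ) := by
    rintro i x hx ⟨j, hj1, hj2⟩
    rw [hF] at hx
    by_cases hij : j = i
    · subst hij; linarith [hx.1.1]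
    · linarith [(hx.2 j hij).2]
  -- (d) measure computation
  have hSpi : ∀ i, S i = Set.univ.pi (fun j => if j = i
      then Set.Ioc (1-2/(d:ℝ)) (1-1/(d:ℝ)) else Set.Icc 0 (1-2/(d:ℝ))) := by
    intro i
    rw [hS i]
    ext x
    simp only [Set.mem_pi, Set.mem_univ, true_implies, Set.mem_setOf_eq]
    constructor
    · rintro ⟨h1, h2⟩ j
      by_cases hj : j = i
      · subst hj; simp only [if_pos rfl]; exact h1
      · simp only [if_neg hj, Set.mem_Icc]; exact h2 j hj
    · intro h
      refine ⟨by simpa using h i, fun j hj => by simpa [if_neg hj] using h j⟩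
  have hSm : ∀ i, MeasurableSet (S i) := by
    intro i
    rw [hSpi i]
    exact MeasurableSet.univ_pi fun j => by
      by_cases hj : j = i
      · simp [hj, measurableSet_Ioc]
      · simp [hj, measurableSet_Icc]
  have hvol : ∀ i, volume (S i)
      = ENNReal.ofReal (1/(d:ℝ)) * ENNReal.ofReal (1-2/(d:ℝ)) ^ (d-1) := by
    intro i
    rw [hSpi i, volume_pi_pi]
    have hval : ∀ j : Fin d, volume (if j = i then Set.Ioc (1-2/(d:ℝ)) (1-1/(d:ℝ))
        else Set.Icc 0 (1-2/(d:ℝ)))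
        = if j = i then ENNReal.ofReal (1/(d:ℝ)) else ENNReal.ofReal (1-2/(d:ℝ)) := by
      intro j
      by_cases hj : j = i
      · simp only [if_pos hj, Real.volume_Ioc]
        congr 1; ring
      · simp only [if_neg hj, Real.volume_Icc]
        congr 1; ring
    simp only [hval]
    rw [← Finset.mul_prod_erase Finset.univ _ (Finset.mem_univ i), if_pos rfl]
    congr 1
    rw [Finset.prod_congr rfl (fun j hj => if_neg (Finset.ne_of_mem_erase hj)),
      Finset.prod_const, Finset.card_erase_of_mem (Finset.mem_univ i), Finset.card_univ,
      Fintype.card_fin]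
  have hd1 : volume (⋃ i, S i) = ENNReal.ofReal ((1 - 2/(d:ℝ))^(d-1)) := by
    rw [measure_iUnion (fun i j hij => ha2 i j hij) hSm]
    rw [tsum_fintype]
    simp only [hvol]
    rw [Finset.sum_const, Finset.card_univ, Fintype.card_fin, nsmul_eq_mul, ← mul_assoc]
    rw [show ((d:ENNReal)) = ENNReal.ofReal d from (ENNReal.ofReal_natCast d).symm,
      ← ENNReal.ofReal_mul (by positivity)]
    rw [show (d:ℝ) * (1/(d:ℝ)) = 1 by field_simp]
    rw [ENNReal.ofReal_one, one_mul, ← ENNReal.ofReal_pow (by linarith : (0:ℝ) ≤ 1 - 2/(d:ℝ))]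
  refine ⟨ha1, ha2, ha3, hb1, hb2, hc1, hc2, hd1, ?_⟩
  exact key d hd
end

section
/- Define Centrist : [0,1]^d → {0,1} by Centrist(x) = 1 iff there exists i with x_i ∈ (1 - 2/d, 1 - 1/d]. The distance of Centrist to the set of monotone Boolean functions, under the uniform measure on [0,1]^d, is at least (1-2/d)^{d-1} (which is Ω(1) for d ≥ 4). -/
/-!
Each box `S i = {x | x i ∈ (1 - 2/d, 1 - 1/d], x j ∈ [0, 1 - 2/d] for j ≠ i}` lies in the
support of `Centrist`, while its translate `S i + e i / d` lies outside it and above it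
coordinatewise. A monotone `g` that is `1` at `x ∈ S i` is therefore also `1` at `x + e i / d`,
so `g` disagrees with `Centrist` at `x` or at `x + e i / d`. The `2d` boxes and translates are
pairwise disjoint and translation preserves volume, so the disagreement set has volume at least
`∑ i, vol (S i) = d · (1/d) · (1 - 2/d)^(d-1)`. As `g` need not be measurable, these bounds are
for the outer measure, which translation also preserves.
-/

open Function MeasureTheory Set

theorem sum_measure_inter_le_measure {α ι : Type*} [MeasurableSpace α] [Fintype ι]
    (μ : Measure α) {E : ι → Set α} (hE : ∀ i, MeasurableSet (E i))
    (hdisj : Pairwise (Disjoint on E)) (D : Set α) :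
    ∑ i, μ (D ∩ E i) ≤ μ D :=
  calc ∑ i, μ (D ∩ E i) = μ.restrict (⋃ i, E i) D := by
        simp only [Measure.restrict_iUnion hdisj hE, Measure.sum_apply_of_countable,
          tsum_fintype, Measure.restrict_apply' (hE _)]
    _ ≤ μ D := Measure.restrict_apply_le _ _

theorem sum_measure_le_of_translation_matching {G ι : Type*} [MeasurableSpace G] [AddGroup G]
    [MeasurableAdd G] [Fintype ι] (μ : Measure G) [μ.IsAddRightInvariant]
    {A B : ι → Set G} (v : ι → G) {D : Set G}
    (hA : ∀ i, MeasurableSet (A i)) (hB : ∀ i, MeasurableSet (B i))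
    (hdisj : Pairwise (Disjoint on Sum.elim A B))
    (hAB : ∀ i, ∀ x ∈ A i, x + v i ∈ B i) (hD : ∀ i, ∀ x ∈ A i, x ∈ D ∨ x + v i ∈ D) :
    ∑ i, μ (A i) ≤ μ D := by
  have hpair (i : ι) : μ (A i) ≤ μ (D ∩ A i) + μ (D ∩ B i) :=
    calc μ (A i) ≤ μ (D ∩ A i ∪ (· + v i) ⁻¹' (D ∩ B i)) := measure_mono fun x hx =>
          (hD i x hx).imp (fun h => ⟨h, hx⟩) (fun h => ⟨h, hAB i x hx⟩)
      _ ≤ μ (D ∩ A i) + μ ((· + v i) ⁻¹' (D ∩ B i)) := measure_union_le _ _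
      _ = μ (D ∩ A i) + μ (D ∩ B i) := by rw [measure_preimage_add_right]
  calc ∑ i, μ (A i) ≤ ∑ i, (μ (D ∩ A i) + μ (D ∩ B i)) := Finset.sum_le_sum fun i _ => hpair i
    _ = ∑ p, μ (D ∩ Sum.elim A B p) := by
        rw [Fintype.sum_sum_type, Finset.sum_add_distrib]; rfl
    _ ≤ μ D := sum_measure_inter_le_measure μ (by rintro (i | i) <;> simp [hA, hB]) hdisj D

section CrossBox

variable {ι : Type*} [DecidableEq ι]

def crossBox (i : ι) (s t : Set ℝ) : Set (ι → ℝ) :=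
  univ.pi (update (fun _ => t) i s)

variable {i j : ι} {s s' t : Set ℝ} {x : ι → ℝ}

theorem mem_crossBox : x ∈ crossBox i s t ↔ x i ∈ s ∧ ∀ j ≠ i, x j ∈ t := by
  simp only [crossBox, mem_univ_pi]
  exact forall_update_iff _ fun j u => x j ∈ u

theorem measurableSet_crossBox [Countable ι] (hs : MeasurableSet s) (ht : MeasurableSet t) :
    MeasurableSet (crossBox i s t) :=
  MeasurableSet.univ_pi fun j => by rcases eq_or_ne j i with rfl | hj <;> simp [*]

theorem volume_crossBox [Fintype ι] (i : ι) (s t : Set ℝ) :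
    volume (crossBox i s t) = volume s * volume t ^ (Fintype.card ι - 1) := by
  rw [crossBox, volume_pi_pi, ← Finset.mul_prod_erase _ _ (Finset.mem_univ i), update_self,
    Finset.prod_congr rfl fun j hj => by rw [update_of_ne (Finset.ne_of_mem_erase hj)],
    Finset.prod_const, Finset.card_erase_of_mem (Finset.mem_univ i), Finset.card_univ]

theorem crossBox_subset_Icc {l u : ℝ} (hs : s ⊆ Icc l u) (ht : t ⊆ Icc l u) :
    crossBox i s t ⊆ Icc (fun _ => l) (fun _ => u) := by
  rw [← pi_univ_Icc]
  intro x hx j _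
  obtain ⟨hxi, hxj⟩ := mem_crossBox.1 hx
  rcases eq_or_ne j i with rfl | hj
  exacts [hs hxi, ht (hxj j hj)]

theorem add_single_mem_crossBox_Ioc {a b : ℝ} (hx : x ∈ crossBox i (Ioc a b) t) :
    x + Pi.single i (b - a) ∈ crossBox i (Ioc b (2 * b - a)) t := by
  obtain ⟨⟨hxa, hxb⟩, hxj⟩ := mem_crossBox.1 hx
  refine mem_crossBox.2 ⟨?_, fun j hj => by simpa [hj] using hxj j hj⟩
  simp only [Pi.add_apply, Pi.single_eq_same, mem_Ioc]
  constructor <;> linarith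

theorem disjoint_crossBox_of_ne (hij : i ≠ j) (hst : Disjoint s t) :
    Disjoint (crossBox i s t) (crossBox j s' t) :=
  disjoint_left.2 fun _ hx hx' =>
    hst.notMem_of_mem_left (mem_crossBox.1 hx).1 ((mem_crossBox.1 hx').2 i hij)

theorem disjoint_crossBox (h : Disjoint s s') (hst : Disjoint s t) :
    Disjoint (crossBox i s t) (crossBox j s' t) := by
  rcases eq_or_ne i j with rfl | hij
  · exact disjoint_left.2 fun _ hx hx' =>
      h.notMem_of_mem_left (mem_crossBox.1 hx).1 (mem_crossBox.1 hx').1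
  · exact disjoint_crossBox_of_ne hij hst

theorem pairwise_disjoint_sumElim_crossBox (h : Disjoint s s') (hst : Disjoint s t)
    (hs't : Disjoint s' t) :
    Pairwise (Disjoint on Sum.elim (fun i : ι => crossBox i s t) (fun i => crossBox i s' t)) := by
  rintro (i | i) (j | j) hij
  · exact disjoint_crossBox_of_ne (fun h => hij (congrArg _ h)) hst
  · exact disjoint_crossBox h hst
  · exact (disjoint_crossBox h hst).symm
  · exact disjoint_crossBox_of_ne (fun h => hij (congrArg _ h)) hs't

end CrossBox

section Centrist

variable {ι : Type*} [DecidableEq ι]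

def centrist (a b : ℝ) (x : ι → ℝ) : Prop :=
  ∃ i, a < x i ∧ x i ≤ b

def centristDisagreement (a b : ℝ) (g : (ι → ℝ) → Bool) : Set (ι → ℝ) :=
  {x | x ∈ Icc 0 1 ∧ ¬(centrist a b x ↔ g x = true)}

theorem not_centrist_of_mem_crossBox {a b c : ℝ} {i : ι} {y : ι → ℝ}
    (hy : y ∈ crossBox i (Ioc b c) (Icc 0 a)) : ¬centrist a b y := by
  rintro ⟨k, hk⟩
  obtain ⟨hyi, hyj⟩ := mem_crossBox.1 hy
  rcases eq_or_ne k i with rfl | hki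
  · linarith [hyi.1]
  · linarith [(hyj k hki).2]

theorem mem_or_add_single_mem_centristDisagreement {g : (ι → ℝ) → Bool}
    (hg : ∀ x y, x ∈ Icc 0 1 → y ∈ Icc 0 1 → x ≤ y → g x = true → g y = true)
    {a b : ℝ} (ha : 0 ≤ a) (hab : a < b) (hb : 2 * b - a ≤ 1) {i : ι} {x : ι → ℝ}
    (hx : x ∈ crossBox i (Ioc a b) (Icc 0 a)) :
    x ∈ centristDisagreement a b g ∨ x + Pi.single i (b - a) ∈ centristDisagreement a b g := by
  have hxi := (mem_crossBox.1 hx).1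
  have hy := add_single_mem_crossBox_Ioc hx
  have hIoc {l u : ℝ} (hl : 0 ≤ l) (hu : u ≤ 1) : Ioc l u ⊆ Icc 0 1 :=
    fun z hz => ⟨hl.trans hz.1.le, hz.2.trans hu⟩
  have hIcc : Icc 0 a ⊆ Icc 0 1 := Icc_subset_Icc_right (by linarith)
  have hx01 := crossBox_subset_Icc (hIoc ha (by linarith)) hIcc hx
  have hy01 := crossBox_subset_Icc (hIoc (by linarith) hb) hIcc hy
  cases hgx : g x
  · exact .inl ⟨hx01, fun h => by simpa [hgx] using h.1 ⟨i, hxi⟩⟩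
  · have hgy := hg _ _ hx01 hy01 (le_add_of_nonneg_right (Pi.single_nonneg.2 (by linarith))) hgx
    exact .inr ⟨hy01, fun h => not_centrist_of_mem_crossBox hy (h.2 hgy)⟩

end Centrist

/-- The distance of the `Centrist` function to monotonicity, under the uniform
measure on `[0,1]^d`, is at least `(1-2/d)^(d-1)`: every function `g` that is
monotone on the unit cube disagrees with `Centrist` on a set of measure at least
`(1-2/d)^(d-1)`. -/
theorem stmt_11 (d : ℕ) (hd : 4 ≤ d) (g : (Fin d → ℝ) → Bool)
    (hg : ∀ x y : Fin d → ℝ, x ∈ Set.Icc (0 : Fin d → ℝ) 1 →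
      y ∈ Set.Icc (0 : Fin d → ℝ) 1 → x ≤ y → g x = true → g y = true) :
    ENNReal.ofReal ((1 - 2/(d:ℝ))^(d-1)) ≤
      volume {x : Fin d → ℝ | x ∈ Set.Icc (0 : Fin d → ℝ) 1 ∧
        ¬ ((∃ i, 1 - 2/(d:ℝ) < x i ∧ x i ≤ 1 - 1/(d:ℝ)) ↔ g x = true)} := by
  have hd2 : (2 : ℝ) ≤ d := by exact_mod_cast (by omega : 2 ≤ d)
  set a := 1 - 2 / (d : ℝ)
  set b := 1 - 1 / (d : ℝ)
  have ha : 0 ≤ a := by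
    rw [sub_nonneg, div_le_one (by linarith)]; exact hd2
  have hab : a < b := by simp only [a, b]; gcongr; norm_num
  have hdba : (d : ℝ) * (b - a) = 1 := by simp only [a, b]; field_simp; ring
  have hb : 2 * b - a = 1 := by simp only [a, b]; ring
  show _ ≤ volume (centristDisagreement a b g)
  calc ENNReal.ofReal (a ^ (d - 1)) = ∑ i : Fin d, volume (crossBox i (Ioc a b) (Icc 0 a)) := by
        simp only [volume_crossBox, Real.volume_Ioc, Real.volume_Icc, sub_zero, Finset.sum_const,
          Finset.card_univ, Fintype.card_fin, nsmul_eq_mul]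
        rw [← mul_assoc, ← ENNReal.ofReal_natCast, ← ENNReal.ofReal_mul (by positivity), hdba,
          ENNReal.ofReal_one, one_mul, ENNReal.ofReal_pow ha]
    _ ≤ volume (centristDisagreement a b g) :=
        sum_measure_le_of_translation_matching volume (fun i => Pi.single i (b - a))
          (fun _ => measurableSet_crossBox measurableSet_Ioc measurableSet_Icc)
          (fun _ => measurableSet_crossBox measurableSet_Ioc measurableSet_Icc)
          (pairwise_disjoint_sumElim_crossBox (Ioc_disjoint_Ioc_of_le le_rfl)
            ((Iic_disjoint_Ioc le_rfl).symm.mono_right Icc_subset_Iic_self)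
            ((Iic_disjoint_Ioc hab.le).symm.mono_right Icc_subset_Iic_self))
          (fun _ _ => add_single_mem_crossBox_Ioc)
          (fun _ _ => mem_or_add_single_mem_centristDisagreement hg ha hab hb.le)
end

section
/- Let f : {-1,1}^{d·m} → {-1,1} with inputs partitioned into d blocks of size m. Under the random block-restriction (for each block i: random subset R_i with each element included independently with probability 1/2, uniform B_i ∈ {-1,1}^{I_i}; x_j = B_i(j) if j ∈ R_i, else x_j = y_i B_i(j)), the restricted function f_T : {-1,1}^d → {-1,1}, f_T(y) = f(x), satisfies E_T[Var(f_T)] ≥ Var(f)/2, where variances are with respect to the uniform measure. -/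
/-- The `{-1,1}` value of a Boolean bit. -/
def sgn (t : Bool) : ℝ := if t then 1 else -1

namespace Stmt13

variable {d m : ℕ}

def ov (S : Finset (Fin d)) (z x : Fin d → Fin m → Bool) : Fin d → Fin m → Bool :=
  fun i j => if i ∈ S then z i j else x i j

noncomputable def av (S : Finset (Fin d)) (F : (Fin d → Fin m → Bool) → ℝ)
    (x : Fin d → Fin m → Bool) : ℝ :=
  (∑ z : Fin d → Fin m → Bool, F (ov S z x)) / 2^(d*m)

lemma card_X : (Fintype.card (Fin d → Fin m → Bool) : ℝ) = 2^(d*m) := by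
  rw [mul_comm]
  simp [Fintype.card_fun, pow_mul]

lemma two_pow_ne : (2:ℝ)^(d*m) ≠ 0 := by positivity

lemma sum_ov_pair (S : Finset (Fin d)) (G : (Fin d → Fin m → Bool) → (Fin d → Fin m → Bool) → ℝ) :
    ∑ x : Fin d → Fin m → Bool, ∑ z : Fin d → Fin m → Bool, G (ov S z x) (ov S x z)
      = ∑ x : Fin d → Fin m → Bool, ∑ z : Fin d → Fin m → Bool, G x z := by
  have hinv : Function.Involutive
      (fun p : (Fin d → Fin m → Bool) × (Fin d → Fin m → Bool) => (ov S p.2 p.1, ov S p.1 p.2)) := by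
    intro p
    obtain ⟨a, b⟩ := p
    simp only [ov, Prod.mk.injEq]
    constructor <;> (funext i j; by_cases h : i ∈ S <;> simp [ov, h])
  have key : ∑ p : (Fin d → Fin m → Bool) × (Fin d → Fin m → Bool), G (ov S p.2 p.1) (ov S p.1 p.2)
      = ∑ p : (Fin d → Fin m → Bool) × (Fin d → Fin m → Bool), G p.1 p.2 :=
    Fintype.sum_bijective _ hinv.bijective _ _ (fun p => rfl)
  simpa only [Fintype.sum_prod_type] using key

lemma sum_av (S : Finset (Fin d)) (F : (Fin d → Fin m → Bool) → ℝ) :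
    ∑ x : Fin d → Fin m → Bool, av S F x = ∑ x : Fin d → Fin m → Bool, F x := by
  have h := sum_ov_pair S (fun a _ => F a)
  simp only [av, ← Finset.sum_div]
  rw [h]
  simp only [Finset.sum_const, Finset.card_univ, nsmul_eq_mul]
  have hmd : (2:ℝ)^(m*d) = 2^(d*m) := by rw [mul_comm]
  rw [← Finset.mul_sum, card_X, mul_div_cancel_left₀ _ two_pow_ne]

variable (S : Finset (Fin d)) (F G : (Fin d → Fin m → Bool) → ℝ)

lemma ov_ov (z z' x : Fin d → Fin m → Bool) : ov S z' (ov S z x) = ov S z' x := by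
  funext i j; by_cases h : i ∈ S <;> simp [ov, h]

lemma ov_cancel (z x : Fin d → Fin m → Bool) : ov S (ov S x z) (ov S z x) = x := by
  funext i j; by_cases h : i ∈ S <;> simp [ov, h]

lemma av_ov (z x : Fin d → Fin m → Bool) : av S F (ov S z x) = av S F x := by
  simp only [av, ov_ov]

lemma av_idem (x : Fin d → Fin m → Bool) : av S (av S F) x = av S F x := by
  simp only [av, ov_ov]
  rw [Finset.sum_div, Finset.sum_const, Finset.card_univ, nsmul_eq_mul, card_X]
  field_simp

lemma av_selfadjoint :
    ∑ x : Fin d → Fin m → Bool, av S F x * G x = ∑ x : Fin d → Fin m → Bool, F x * av S G x := by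
  have h := sum_ov_pair S (fun a b => F a * G (ov S b a))
  simp only [ov_cancel] at h
  calc ∑ x : Fin d → Fin m → Bool, av S F x * G x
      = (∑ x : Fin d → Fin m → Bool, ∑ z : Fin d → Fin m → Bool, F (ov S z x) * G x)/2^(d*m) := by
        simp only [av, div_mul_eq_mul_div, Finset.sum_mul, ← Finset.sum_div]
    _ = (∑ x : Fin d → Fin m → Bool, ∑ z : Fin d → Fin m → Bool, F x * G (ov S z x))/2^(d*m) := by
        rw [h]
    _ = ∑ x : Fin d → Fin m → Bool, F x * av S G x := by
        simp only [av, ← mul_div_assoc, Finset.mul_sum, ← Finset.sum_div]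

lemma av_contraction :
    ∑ x : Fin d → Fin m → Bool, (av S F x)^2 ≤ ∑ x : Fin d → Fin m → Bool, (F x)^2 := by
  have hpt : ∀ x, (av S F x)^2 ≤ (∑ z : Fin d → Fin m → Bool, (F (ov S z x))^2) / 2^(d*m) := by
    intro x
    rw [av, div_pow]
    rw [div_le_div_iff₀ (by positivity) (by positivity)]
    have hcs := sq_sum_le_card_mul_sum_sq (s := (Finset.univ : Finset (Fin d → Fin m → Bool)))
      (f := fun z => F (ov S z x))
    rw [Finset.card_univ] at hcs
    calc (∑ z : Fin d → Fin m → Bool, F (ov S z x))^2 * 2^(d*m)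
        ≤ ((Fintype.card (Fin d → Fin m → Bool) : ℝ) * ∑ z : Fin d → Fin m → Bool, (F (ov S z x))^2) * 2^(d*m) := by
          apply mul_le_mul_of_nonneg_right _ (by positivity)
          exact_mod_cast hcs
      _ = (∑ z : Fin d → Fin m → Bool, (F (ov S z x))^2) * ((2:ℝ)^(d*m))^2 := by
          rw [card_X]; ring
  calc ∑ x : Fin d → Fin m → Bool, (av S F x)^2
      ≤ ∑ x : Fin d → Fin m → Bool, (∑ z : Fin d → Fin m → Bool, (F (ov S z x))^2) / 2^(d*m) :=
        Finset.sum_le_sum fun x _ => hpt x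
    _ = ∑ x : Fin d → Fin m → Bool, (F x)^2 := by
        rw [← Finset.sum_div, sum_ov_pair S (fun a _ => (F a)^2)]
        simp only [Finset.sum_const, Finset.card_univ, nsmul_eq_mul]
        rw [← Finset.mul_sum, card_X, mul_div_cancel_left₀ _ two_pow_ne]

lemma ov_compl (w z x : Fin d → Fin m → Bool) : ov Sᶜ w (ov S z x) = ov S z w := by
  funext i j; by_cases h : i ∈ S <;> simp [ov, h]

lemma av_compl_av (x : Fin d → Fin m → Bool) :
    av S (av Sᶜ F) x = (∑ z : Fin d → Fin m → Bool, F z) / 2^(d*m) := by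
  calc av S (av Sᶜ F) x
      = (∑ z : Fin d → Fin m → Bool, (∑ w : Fin d → Fin m → Bool, F (ov S z w))/2^(d*m))/2^(d*m) := by
        simp only [av, ov_compl]
    _ = (∑ w : Fin d → Fin m → Bool, ∑ z : Fin d → Fin m → Bool, F (ov S z w))/(2^(d*m) * 2^(d*m)) := by
        rw [← Finset.sum_div, Finset.sum_comm, div_div]
    _ = (∑ z : Fin d → Fin m → Bool, F z) / 2^(d*m) := by
        rw [sum_ov_pair S (fun a _ => F a)]
        simp only [Finset.sum_const, Finset.card_univ, nsmul_eq_mul]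
        rw [← Finset.mul_sum, card_X, mul_div_mul_left _ _ two_pow_ne]

lemma key_ineq :
    (∑ x : Fin d → Fin m → Bool, (av S F x)^2) + ∑ x : Fin d → Fin m → Bool, (av Sᶜ F x)^2
      ≤ (∑ x : Fin d → Fin m → Bool, (F x)^2)
        + (∑ x : Fin d → Fin m → Bool, F x)^2 / 2^(d*m) := by
  set B := av Sᶜ F with hB
  set Gf : (Fin d → Fin m → Bool) → ℝ := fun x => F x - B x with hGf
  have hμ : ∀ x, av S B x = (∑ z : Fin d → Fin m → Bool, F z)/2^(d*m) := av_compl_av S F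
  have hlin : ∀ x, av S Gf x = av S F x - av S B x := by
    intro x
    simp only [av, hGf, Finset.sum_sub_distrib, sub_div]
  have hAG : ∀ x, av S F x = (∑ z : Fin d → Fin m → Bool, F z)/2^(d*m) + av S Gf x := by
    intro x; rw [hlin, hμ]; ring
  have hsumB : ∑ x : Fin d → Fin m → Bool, B x = ∑ x : Fin d → Fin m → Bool, F x :=
    sum_av Sᶜ F
  have hsumG : ∑ x : Fin d → Fin m → Bool, av S Gf x = 0 := by
    rw [sum_av]
    simp [hGf, Finset.sum_sub_distrib, hsumB]
  have hFB : ∑ x : Fin d → Fin m → Bool, F x * B x = ∑ x : Fin d → Fin m → Bool, B x ^ 2 := by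
    have h1 := av_selfadjoint Sᶜ F B
    have h2 : ∀ x, av Sᶜ B x = B x := by intro x; rw [hB]; exact av_idem Sᶜ F x
    simp only [h2, ← hB, ← pow_two] at h1
    exact h1.symm
  have hcontr := av_contraction S Gf
  have hexp : ∑ x : Fin d → Fin m → Bool, (av S F x)^2
      = (∑ x : Fin d → Fin m → Bool, F x)^2/2^(d*m)
        + ∑ x : Fin d → Fin m → Bool, (av S Gf x)^2 := by
    have hpt : ∀ x, (av S F x)^2
        = ((∑ z : Fin d → Fin m → Bool, F z)/2^(d*m))^2
          + 2*((∑ z : Fin d → Fin m → Bool, F z)/2^(d*m)) * av S Gf x + (av S Gf x)^2 := by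
      intro x; rw [hAG x]; ring
    rw [Finset.sum_congr rfl (fun x _ => hpt x)]
    rw [Finset.sum_add_distrib, Finset.sum_add_distrib, Finset.sum_const, ← Finset.mul_sum,
      hsumG, Finset.card_univ, nsmul_eq_mul, card_X]
    rw [div_pow, mul_zero]
    have : (2:ℝ)^(d*m) * ((∑ z : Fin d → Fin m → Bool, F z)^2 / ((2:ℝ)^(d*m))^2)
        = (∑ z : Fin d → Fin m → Bool, F z)^2 / 2^(d*m) := by
      field_simp
    rw [this, add_zero]
  have hGsq : ∑ x : Fin d → Fin m → Bool, Gf x^2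
      = (∑ x : Fin d → Fin m → Bool, F x^2) - ∑ x : Fin d → Fin m → Bool, B x^2 := by
    have hpt : ∀ x, Gf x^2 = F x^2 - 2*(F x * B x) + B x^2 := by
      intro x; simp only [hGf]; ring
    rw [Finset.sum_congr rfl (fun x _ => hpt x)]
    rw [Finset.sum_add_distrib, Finset.sum_sub_distrib, ← Finset.mul_sum, hFB]
    ring
  linarith

lemma sum_key :
    ∑ S : Finset (Fin d), ∑ x : Fin d → Fin m → Bool, (av S F x)^2
      ≤ 2^d * ((∑ x : Fin d → Fin m → Bool, (F x)^2)
          + (∑ x : Fin d → Fin m → Bool, F x)^2 / 2^(d*m)) / 2 := by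
  have hc : ∑ S : Finset (Fin d), ∑ x : Fin d → Fin m → Bool, (av Sᶜ F x)^2
      = ∑ S : Finset (Fin d), ∑ x : Fin d → Fin m → Bool, (av S F x)^2 := by
    refine Fintype.sum_bijective (fun S : Finset (Fin d) => Sᶜ)
      (Function.Involutive.bijective fun S => compl_compl S) _ _ (fun S => rfl)
  have h2 : (2:ℝ) * ∑ S : Finset (Fin d), ∑ x : Fin d → Fin m → Bool, (av S F x)^2
      ≤ 2^d * ((∑ x : Fin d → Fin m → Bool, (F x)^2)
          + (∑ x : Fin d → Fin m → Bool, F x)^2 / 2^(d*m)) := by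
    calc (2:ℝ) * ∑ S : Finset (Fin d), ∑ x : Fin d → Fin m → Bool, (av S F x)^2
        = ∑ S : Finset (Fin d), ((∑ x : Fin d → Fin m → Bool, (av S F x)^2)
            + ∑ x : Fin d → Fin m → Bool, (av Sᶜ F x)^2) := by
          rw [Finset.sum_add_distrib, hc]; ring
      _ ≤ ∑ S : Finset (Fin d), ((∑ x : Fin d → Fin m → Bool, (F x)^2)
            + (∑ x : Fin d → Fin m → Bool, F x)^2 / 2^(d*m)) :=
          Finset.sum_le_sum fun S _ => key_ineq S F
      _ = 2^d * ((∑ x : Fin d → Fin m → Bool, (F x)^2)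
            + (∑ x : Fin d → Fin m → Bool, F x)^2 / 2^(d*m)) := by
          rw [Finset.sum_const, Finset.card_univ, nsmul_eq_mul]
          norm_num [Fintype.card_finset]
  linarith

def Xm (y : Fin d → Bool) (R : Fin d → Finset (Fin m)) (B : Fin d → Fin m → Bool) :
    Fin d → Fin m → Bool :=
  fun i j => if j ∈ R i then B i j else (y i == B i j)

lemma Xm_invol (y : Fin d → Bool) (R : Fin d → Finset (Fin m)) :
    Function.Involutive (Xm y R) := by
  intro B; funext i j
  by_cases h : j ∈ R i
  · simp [Xm, h]
  · simp only [Xm, h, if_neg]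
    cases y i <;> cases B i j <;> rfl

lemma step_a (y y' : Fin d → Bool) (R : Fin d → Finset (Fin m)) :
    ∑ B : Fin d → Fin m → Bool, F (Xm y R B) * F (Xm y' R B)
      = ∑ x : Fin d → Fin m → Bool, F x * F (Xm (fun i => y i == y' i) R x) := by
  refine Fintype.sum_bijective (Xm y R) (Xm_invol y R).bijective _ _ (fun B => ?_)
  congr 1
  congr 1
  funext i j
  by_cases h : j ∈ R i
  · simp [Xm, h]
  · simp only [Xm, h, if_neg]
    cases y i <;> cases y' i <;> cases B i j <;> rfl

def toR (w : Fin d → Fin m → Bool) : Fin d → Finset (Fin m) :=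
  fun i => Finset.univ.filter (fun j => w i j = true)

lemma toR_bijective : Function.Bijective (toR (d := d) (m := m)) := by
  rw [Fintype.bijective_iff_injective_and_card]
  constructor
  · intro w w' h
    funext i j
    have := congrFun h i
    have hj : (j ∈ toR w i) = (j ∈ toR w' i) := by rw [this]
    simpa [toR] using hj
  · simp [Fintype.card_fun, Fintype.card_finset]

lemma step_bc (c : Fin d → Bool) (x : Fin d → Fin m → Bool) :
    ∑ R : Fin d → Finset (Fin m), F (Xm c R x)
      = ∑ z : Fin d → Fin m → Bool, F (ov (Finset.univ.filter fun i => c i = false) z x) := by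
  set S : Finset (Fin d) := Finset.univ.filter fun i => c i = false with hS
  have h1 : ∑ R : Fin d → Finset (Fin m), F (Xm c R x)
      = ∑ w : Fin d → Fin m → Bool, F (Xm c (toR w) x) :=
    (Fintype.sum_bijective toR toR_bijective _ _ (fun w => rfl)).symm
  rw [h1]
  have hψ : Function.Involutive
      (fun w : Fin d → Fin m → Bool => (fun i j => if c i then w i j else (w i j == x i j)) :
        (Fin d → Fin m → Bool) → (Fin d → Fin m → Bool)) := by
    intro w; funext i j
    by_cases h : c i
    · simp [h]
    · simp only [h, if_neg, Bool.false_eq_true, if_false]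
      cases w i j <;> cases x i j <;> rfl
  refine Fintype.sum_bijective _ hψ.bijective _ _ (fun w => ?_)
  congr 1
  funext i j
  have hmem : i ∈ S ↔ c i = false := by simp [hS]
  by_cases h : c i
  · have : i ∉ S := by simp [hmem, h]
    simp only [ov, this, if_neg, if_false]
    simp only [Xm, toR, Finset.mem_filter, Finset.mem_univ, true_and]
    by_cases hw : w i j
    · simp [hw]
    · simp [hw, h]
  · have hiS : i ∈ S := by simp [hmem, h]
    simp only [ov, hiS, if_pos]
    simp only [Xm, toR, Finset.mem_filter, Finset.mem_univ, true_and]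
    by_cases hw : w i j
    · simp [hw, h]
    · simp [hw, h]

lemma sum_mul_av :
    ∑ x : Fin d → Fin m → Bool, F x * av S F x
      = ∑ x : Fin d → Fin m → Bool, (av S F x)^2 := by
  have h := av_selfadjoint S F (av S F)
  simp only [av_idem] at h
  rw [← h]
  exact Finset.sum_congr rfl fun x _ => (pow_two _).symm

lemma inner_eq (y y' : Fin d → Bool) :
    ∑ R : Fin d → Finset (Fin m), ∑ B : Fin d → Fin m → Bool, F (Xm y R B) * F (Xm y' R B)
      = 2^(d*m) * ∑ x : Fin d → Fin m → Bool,
          (av (Finset.univ.filter fun i => ¬ y i = y' i) F x)^2 := by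
  have hSeq : (Finset.univ.filter fun i => (fun i => y i == y' i) i = false)
      = (Finset.univ.filter fun i : Fin d => ¬ y i = y' i) := by
    apply Finset.filter_congr
    intro i _
    simp
  calc ∑ R : Fin d → Finset (Fin m), ∑ B : Fin d → Fin m → Bool, F (Xm y R B) * F (Xm y' R B)
      = ∑ R : Fin d → Finset (Fin m), ∑ x : Fin d → Fin m → Bool,
          F x * F (Xm (fun i => y i == y' i) R x) := by
        exact Finset.sum_congr rfl fun R _ => step_a F y y' R
    _ = ∑ x : Fin d → Fin m → Bool, F x *
          ∑ R : Fin d → Finset (Fin m), F (Xm (fun i => y i == y' i) R x) := by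
        rw [Finset.sum_comm]
        exact Finset.sum_congr rfl fun x _ => (Finset.mul_sum _ _ _).symm
    _ = ∑ x : Fin d → Fin m → Bool, F x *
          (2^(d*m) * av (Finset.univ.filter fun i => ¬ y i = y' i) F x) := by
        refine Finset.sum_congr rfl fun x _ => ?_
        rw [step_bc F _ x, hSeq]
        rw [av, mul_div_cancel₀ _ two_pow_ne]
    _ = 2^(d*m) * ∑ x : Fin d → Fin m → Bool,
          (av (Finset.univ.filter fun i => ¬ y i = y' i) F x)^2 := by
        rw [← sum_mul_av, Finset.mul_sum]
        exact Finset.sum_congr rfl fun x _ => by ring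

lemma step_d (y : Fin d → Bool) (g : Finset (Fin d) → ℝ) :
    ∑ y' : Fin d → Bool, g (Finset.univ.filter fun i => ¬ y i = y' i)
      = ∑ S : Finset (Fin d), g S := by
  have hbij : Function.Bijective
      (fun (S : Finset (Fin d)) => (fun i => xor (y i) (decide (i ∈ S)) : Fin d → Bool)) := by
    rw [Fintype.bijective_iff_injective_and_card]
    constructor
    · intro S S' h
      ext i
      have := congrFun h i
      cases hy : y i <;> simp [hy] at this <;> simp [this]
    · simp [Fintype.card_finset]
  refine (Fintype.sum_bijective _ hbij _ _ (fun S => ?_)).symm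
  congr 1
  ext i
  simp only [Finset.mem_filter, Finset.mem_univ, true_and]
  cases hy : y i <;> by_cases h : i ∈ S <;> simp [h]

lemma card_R : (Fintype.card (Fin d → Finset (Fin m)) : ℝ) = 2^(d*m) := by
  rw [mul_comm]
  simp [Fintype.card_fun, Fintype.card_finset, pow_mul]

lemma card_Y : (Fintype.card (Fin d → Bool) : ℝ) = 2^d := by
  simp [Fintype.card_fun]

lemma main_bound (F : (Fin d → Fin m → Bool) → ℝ) (hF : ∀ x, F x = 1 ∨ F x = -1) :
    (1 - ((∑ x : Fin d → Fin m → Bool, F x) / 2^(d*m))^2) / 2 ≤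
    (∑ R : Fin d → Finset (Fin m), ∑ B : Fin d → Fin m → Bool,
        (1 - ((∑ y : Fin d → Bool, F (Xm y R B)) / 2^d)^2))
      / (2^(d*m) * 2^(d*m)) := by
  have hN0 : (0:ℝ) < 2^(d*m) := by positivity
  have hD0 : (0:ℝ) < 2^d := by positivity
  -- T : the second moment sum
  have hT : ∑ R : Fin d → Finset (Fin m), ∑ B : Fin d → Fin m → Bool,
        (∑ y : Fin d → Bool, F (Xm y R B))^2
      = 2^(d*m) * (2^d * ∑ S : Finset (Fin d), ∑ x : Fin d → Fin m → Bool, (av S F x)^2) := by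
    calc ∑ R : Fin d → Finset (Fin m), ∑ B : Fin d → Fin m → Bool,
          (∑ y : Fin d → Bool, F (Xm y R B))^2
        = ∑ R : Fin d → Finset (Fin m), ∑ B : Fin d → Fin m → Bool,
            ∑ y : Fin d → Bool, ∑ y' : Fin d → Bool, F (Xm y R B) * F (Xm y' R B) := by
          refine Finset.sum_congr rfl fun R _ => Finset.sum_congr rfl fun B _ => ?_
          rw [pow_two, Finset.sum_mul_sum]
      _ = ∑ R : Fin d → Finset (Fin m), ∑ y : Fin d → Bool,
            ∑ B : Fin d → Fin m → Bool, ∑ y' : Fin d → Bool,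
              F (Xm y R B) * F (Xm y' R B) := by
          refine Finset.sum_congr rfl fun R _ => ?_
          rw [Finset.sum_comm]
      _ = ∑ y : Fin d → Bool, ∑ R : Fin d → Finset (Fin m),
            ∑ B : Fin d → Fin m → Bool, ∑ y' : Fin d → Bool,
              F (Xm y R B) * F (Xm y' R B) := by
          rw [Finset.sum_comm]
      _ = ∑ y : Fin d → Bool, ∑ R : Fin d → Finset (Fin m),
            ∑ y' : Fin d → Bool, ∑ B : Fin d → Fin m → Bool,
              F (Xm y R B) * F (Xm y' R B) := by
          refine Finset.sum_congr rfl fun y _ => Finset.sum_congr rfl fun R _ => ?_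
          rw [Finset.sum_comm]
      _ = ∑ y : Fin d → Bool, ∑ y' : Fin d → Bool,
            ∑ R : Fin d → Finset (Fin m), ∑ B : Fin d → Fin m → Bool,
              F (Xm y R B) * F (Xm y' R B) := by
          refine Finset.sum_congr rfl fun y _ => ?_
          rw [Finset.sum_comm]
      _ = ∑ y : Fin d → Bool, ∑ y' : Fin d → Bool,
            2^(d*m) * ∑ x : Fin d → Fin m → Bool,
              (av (Finset.univ.filter fun i => ¬ y i = y' i) F x)^2 := by
          exact Finset.sum_congr rfl fun y _ => Finset.sum_congr rfl fun y' _ => inner_eq F y y'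
      _ = ∑ y : Fin d → Bool,
            2^(d*m) * ∑ S : Finset (Fin d), ∑ x : Fin d → Fin m → Bool, (av S F x)^2 := by
          refine Finset.sum_congr rfl fun y _ => ?_
          rw [← Finset.mul_sum]
          congr 1
          exact step_d y (fun S => ∑ x : Fin d → Fin m → Bool, (av S F x)^2)
      _ = 2^(d*m) * (2^d * ∑ S : Finset (Fin d), ∑ x : Fin d → Fin m → Bool, (av S F x)^2) := by
          rw [Finset.sum_const, Finset.card_univ, nsmul_eq_mul, card_Y]
          ring
  have hF2 : ∑ x : Fin d → Fin m → Bool, (F x)^2 = 2^(d*m) := by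
    have : ∀ x : Fin d → Fin m → Bool, (F x)^2 = 1 := by
      intro x; rcases hF x with h | h <;> rw [h] <;> norm_num
    rw [Finset.sum_congr rfl fun x _ => this x]
    rw [Finset.sum_const, Finset.card_univ, nsmul_eq_mul, card_X, mul_one]
  have hSK := sum_key F
  rw [hF2] at hSK
  set A : ℝ := ∑ x : Fin d → Fin m → Bool, F x with hA
  have hTbound : ∑ R : Fin d → Finset (Fin m), ∑ B : Fin d → Fin m → Bool,
        (∑ y : Fin d → Bool, F (Xm y R B))^2
      ≤ ((2:ℝ)^d)^2 * ((2^(d*m) * 2^(d*m) + A^2) / 2) := by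
    rw [hT]
    calc (2:ℝ)^(d*m) * (2^d * ∑ S : Finset (Fin d), ∑ x : Fin d → Fin m → Bool, (av S F x)^2)
        ≤ 2^(d*m) * (2^d * (2^d * ((2:ℝ)^(d*m) + A^2 / 2^(d*m)) / 2)) := by
          have h2 : (2:ℝ)^d * ∑ S : Finset (Fin d), ∑ x : Fin d → Fin m → Bool, (av S F x)^2
              ≤ 2^d * (2^d * ((2:ℝ)^(d*m) + A^2 / 2^(d*m)) / 2) := by
            apply mul_le_mul_of_nonneg_left hSK (le_of_lt hD0)
          exact mul_le_mul_of_nonneg_left h2 (le_of_lt hN0)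
      _ = ((2:ℝ)^d)^2 * ((2^(d*m) * 2^(d*m) + A^2) / 2) := by
          field_simp
  -- rewrite the RHS
  have hRsum : ∑ R : Fin d → Finset (Fin m), ∑ B : Fin d → Fin m → Bool,
        (1 - ((∑ y : Fin d → Bool, F (Xm y R B)) / 2^d)^2)
      = 2^(d*m) * 2^(d*m)
        - (∑ R : Fin d → Finset (Fin m), ∑ B : Fin d → Fin m → Bool,
            (∑ y : Fin d → Bool, F (Xm y R B))^2) / ((2:ℝ)^d)^2 := by
    simp only [div_pow, Finset.sum_sub_distrib, ← Finset.sum_div]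
    rw [Finset.sum_const, Finset.sum_const, Finset.card_univ, Finset.card_univ,
      nsmul_eq_mul, nsmul_eq_mul, card_X, card_R]
    ring_nf
  rw [hRsum]
  rw [div_le_div_iff₀ (by norm_num) (by positivity)]
  set T : ℝ := ∑ R : Fin d → Finset (Fin m), ∑ B : Fin d → Fin m → Bool,
      (∑ y : Fin d → Bool, F (Xm y R B))^2 with hTdef
  have hu : T / ((2:ℝ)^d)^2 ≤ (2^(d*m) * 2^(d*m) + A^2) / 2 := by
    rw [div_le_iff₀ (by positivity)]
    calc T ≤ ((2:ℝ)^d)^2 * ((2^(d*m) * 2^(d*m) + A^2) / 2) := hTbound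
      _ = (2^(d*m) * 2^(d*m) + A^2) / 2 * ((2:ℝ)^d)^2 := by ring
  have h1 : (1 - (A / 2^(d*m))^2) * (2^(d*m) * 2^(d*m))
      = 2^(d*m) * 2^(d*m) - A^2 := by
    field_simp
  linarith

end Stmt13

/-- Domain reduction for variance: for a `±1`-valued function `f` on `d` blocks of
`m` bits each, the expected variance of the random block-restriction `f_T` is at
least half the variance of `f`. Variances of `±1`-valued functions are written as
`1 - (mean)²`. -/
theorem stmt_13 (d m : ℕ) (f : (Fin d → Fin m → ℝ) → ℝ)
    (hf : ∀ x : Fin d → Fin m → Bool,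
      f (fun i j => sgn (x i j)) = 1 ∨ f (fun i j => sgn (x i j)) = -1) :
    (1 - ((∑ x : Fin d → Fin m → Bool, f (fun i j => sgn (x i j))) / 2^(d*m))^2) / 2 ≤
    (∑ R : Fin d → Finset (Fin m), ∑ B : Fin d → Fin m → Bool,
        (1 - ((∑ y : Fin d → Bool,
            f (fun i j => if j ∈ R i then sgn (B i j) else sgn (y i) * sgn (B i j)))
          / 2^d)^2))
      / (2^(d*m) * 2^(d*m)) := by
  have harg : ∀ (y : Fin d → Bool) (R : Fin d → Finset (Fin m)) (B : Fin d → Fin m → Bool),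
      (fun i j => if j ∈ R i then sgn (B i j) else sgn (y i) * sgn (B i j))
        = (fun i j => sgn (Stmt13.Xm y R B i j)) := by
    intro y R B
    funext i j
    by_cases h : j ∈ R i
    · simp [Stmt13.Xm, h]
    · simp only [Stmt13.Xm, h, if_neg, if_false]
      cases y i <;> cases B i j <;> simp [sgn] <;> norm_num
  simp only [harg]
  exact Stmt13.main_bound (fun x => f (fun i j => sgn (x i j))) hf
end

section
/- Let ε ∈ (0,1), L = ⌈log₂(2/ε)⌉, and let X be a random variable with values in [0,1] satisfying E[X] ≥ ε/2. Then there exists ℓ ∈ {1,…,L+1} such that Pr[X ≥ 2^{-ℓ}] ≥ 2^ℓ·ε/(8ℓ²). -/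
/-!
Since `X ≤ 1`, it is dominated pointwise by the dyadic staircase
`2^{-M} + ∑_{ℓ ≤ M} 2^{-ℓ} · 1[X ≥ 2^{-ℓ}]`. Integrating with `M = L + 1`, where `2^{-(L+1)} ≤ ε/4`,
gives `ε/2 ≤ E[X] ≤ ε/4 + ∑_{ℓ ≤ L+1} 2^{-ℓ} Pr[X ≥ 2^{-ℓ}]`. If every level failed, the sum would
be `< (ε/8) ∑ 1/ℓ² ≤ ε/4`, a contradiction.
-/

open MeasureTheory ProbabilityTheory

theorem le_pow_natCeil_logb {b x : ℝ} (hb : 1 < b) (hx : 0 < x) : x ≤ b ^ ⌈Real.logb b x⌉₊ := by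
  rw [← Real.rpow_natCast, ← Real.logb_le_iff_le_rpow hb hx]
  exact Nat.le_ceil _

theorem le_zpow_add_sum_indicator (M : ℕ) {x : ℝ} (hx : x ≤ 1) :
    x ≤ 2 ^ (-(M : ℤ)) + ∑ ℓ ∈ Finset.Icc 1 M,
      (Set.Ici ((2 : ℝ) ^ (-(ℓ : ℤ)))).indicator (fun _ ↦ (2 : ℝ) ^ (-(ℓ : ℤ))) x := by
  induction M with
  | zero => simpa using hx
  | succ M ih =>
    -- If level `M + 1` is reached, its term and the new tail together equal the old tail;
    -- otherwise the new tail alone already exceeds `x`.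
    rw [Finset.sum_Icc_succ_top (by omega)]
    by_cases hM : (2 : ℝ) ^ (-((M + 1 : ℕ) : ℤ)) ≤ x
    · have : (2 : ℝ) ^ (-(M : ℤ)) = 2 ^ (-((M + 1 : ℕ) : ℤ)) + 2 ^ (-((M + 1 : ℕ) : ℤ)) := by
        push_cast
        rw [neg_add, zpow_add₀ two_ne_zero]
        norm_num
        ring
      rw [Set.indicator_of_mem (Set.mem_Ici.2 hM)]
      linarith
    · have := Finset.sum_nonneg fun ℓ (_ : ℓ ∈ Finset.Icc 1 M) ↦
        Set.indicator_nonneg (fun _ _ ↦ by positivity : ∀ y ∈ Set.Ici ((2 : ℝ) ^ (-(ℓ : ℤ))),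
          (0 : ℝ) ≤ 2 ^ (-(ℓ : ℤ))) x
      rw [Set.indicator_of_notMem (fun h ↦ hM (Set.mem_Ici.1 h))]
      linarith

theorem integral_le_zpow_add_sum_measureReal {Ω : Type*} [MeasurableSpace Ω] (μ : Measure Ω)
    [IsProbabilityMeasure μ] (M : ℕ) {X : Ω → ℝ} (hX : Measurable X)
    (hrange : ∀ ω, X ω ∈ Set.Icc (0 : ℝ) 1) :
    ∫ ω, X ω ∂μ ≤ 2 ^ (-(M : ℤ)) + ∑ ℓ ∈ Finset.Icc 1 M,
      2 ^ (-(ℓ : ℤ)) * μ.real {ω | (2 : ℝ) ^ (-(ℓ : ℤ)) ≤ X ω} := by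
  have hlevel : ∀ ℓ : ℕ, MeasurableSet {ω | (2 : ℝ) ^ (-(ℓ : ℤ)) ≤ X ω} :=
    fun ℓ ↦ measurableSet_le measurable_const hX
  have hint : ∀ ℓ : ℕ, Integrable
      ({ω | (2 : ℝ) ^ (-(ℓ : ℤ)) ≤ X ω}.indicator fun _ ↦ (2 : ℝ) ^ (-(ℓ : ℤ))) μ :=
    fun ℓ ↦ (integrable_const _).indicator (hlevel ℓ)
  calc ∫ ω, X ω ∂μ
      ≤ ∫ ω, (2 ^ (-(M : ℤ)) + ∑ ℓ ∈ Finset.Icc 1 M,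
          {ω | (2 : ℝ) ^ (-(ℓ : ℤ)) ≤ X ω}.indicator (fun _ ↦ (2 : ℝ) ^ (-(ℓ : ℤ))) ω) ∂μ := by
        refine integral_mono (.of_mem_Icc 0 1 hX.aemeasurable (.of_forall hrange))
          ((integrable_const _).add (integrable_finsetSum _ fun ℓ _ ↦ hint ℓ)) fun ω ↦ ?_
        exact le_zpow_add_sum_indicator M (hrange ω).2
    _ = _ := by
        rw [integral_add (integrable_const _) (integrable_finsetSum _ fun ℓ _ ↦ hint ℓ),
          integral_const, integral_finsetSum _ fun ℓ _ ↦ hint ℓ]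
        refine congrArg₂ _ (by simp) (Finset.sum_congr rfl fun ℓ _ ↦ ?_)
        rw [integral_indicator_const _ (hlevel ℓ), smul_eq_mul, mul_comm]

theorem sum_zpow_mul_lt_quarter {N : ℕ} (hN : 1 ≤ N) {ε : ℝ} (hε : 0 < ε) {p : ℕ → ℝ}
    (hp : ∀ ℓ ∈ Finset.Icc 1 N, p ℓ < 2 ^ ℓ * ε / (8 * (ℓ : ℝ) ^ 2)) :
    ∑ ℓ ∈ Finset.Icc 1 N, 2 ^ (-(ℓ : ℤ)) * p ℓ < ε / 4 := by
  have hIcc : Finset.Icc 1 N = Finset.Ioo 0 (N + 1) := by ext; simp; omega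
  calc ∑ ℓ ∈ Finset.Icc 1 N, 2 ^ (-(ℓ : ℤ)) * p ℓ
      < ∑ ℓ ∈ Finset.Icc 1 N, ε / 8 * ((ℓ : ℝ) ^ 2)⁻¹ := by
        refine Finset.sum_lt_sum_of_nonempty ⟨1, by simp [hN]⟩ fun ℓ hℓ ↦ ?_
        calc 2 ^ (-(ℓ : ℤ)) * p ℓ < 2 ^ (-(ℓ : ℤ)) * (2 ^ ℓ * ε / (8 * (ℓ : ℝ) ^ 2)) := by
              gcongr; exact hp ℓ hℓ
          _ = ε / 8 * ((ℓ : ℝ) ^ 2)⁻¹ := by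
              rw [zpow_neg, zpow_natCast]; field_simp
    _ = ε / 8 * ∑ ℓ ∈ Finset.Ioo 0 (N + 1), ((ℓ : ℝ) ^ 2)⁻¹ := by rw [Finset.mul_sum, hIcc]
    _ ≤ ε / 8 * 2 := by gcongr; simpa using sum_Ioo_inv_sq_le (α := ℝ) 0 (N + 1)
    _ = ε / 4 := by ring

theorem stmt_15_general {Ω : Type*} [MeasureSpace Ω] [IsProbabilityMeasure (ℙ : Measure Ω)]
    (ε : ℝ) (hε : 0 < ε)
    (L : ℕ) (hL : L = ⌈Real.logb 2 (2/ε)⌉₊)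
    (X : Ω → ℝ) (hX : Measurable X) (hrange : ∀ ω, X ω ∈ Set.Icc (0:ℝ) 1)
    (hmean : ε/2 ≤ ∫ ω, X ω) :
    ∃ ℓ : ℕ, 1 ≤ ℓ ∧ ℓ ≤ L + 1 ∧
      ENNReal.ofReal (2^ℓ * ε / (8 * (ℓ:ℝ)^2)) ≤ ℙ {ω | (2:ℝ)^(-(ℓ:ℤ)) ≤ X ω} := by
  by_contra! hsmall
  have htail : (2 : ℝ) ^ (-((L + 1 : ℕ) : ℤ)) ≤ ε / 4 := by
    have h2L : 2 / ε ≤ (2 : ℝ) ^ L := hL ▸ le_pow_natCeil_logb one_lt_two (by positivity)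
    rw [zpow_neg, zpow_natCast, pow_succ]
    calc ((2 : ℝ) ^ L * 2)⁻¹ ≤ (2 / ε * 2)⁻¹ := by gcongr
      _ = ε / 4 := by field_simp; ring
  have hlevels : ∑ ℓ ∈ Finset.Icc 1 (L + 1),
      2 ^ (-(ℓ : ℤ)) * (ℙ : Measure Ω).real {ω | (2 : ℝ) ^ (-(ℓ : ℤ)) ≤ X ω} < ε / 4 :=
    sum_zpow_mul_lt_quarter (by omega) hε fun ℓ hℓ ↦
      ENNReal.toReal_lt_of_lt_ofReal (hsmall ℓ (Finset.mem_Icc.1 hℓ).1 (Finset.mem_Icc.1 hℓ).2)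
  linarith [integral_le_zpow_add_sum_measureReal ℙ (L + 1) hX hrange]

/-- Levin's work investment strategy: if a `[0,1]`-valued random variable has
mean at least `ε/2`, then for some level `ℓ ∈ {1, …, L+1}` with
`L = ⌈log₂(2/ε)⌉`, we have `Pr[X ≥ 2^{-ℓ}] ≥ 2^ℓ ε / (8ℓ²)`. -/
theorem stmt_15 {Ω : Type*} [MeasureSpace Ω] [IsProbabilityMeasure (ℙ : Measure Ω)]
    (ε : ℝ) (hε : 0 < ε) (hε1 : ε < 1)
    (L : ℕ) (hL : L = ⌈Real.logb 2 (2/ε)⌉₊)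
    (X : Ω → ℝ) (hX : Measurable X) (hrange : ∀ ω, X ω ∈ Set.Icc (0:ℝ) 1)
    (hmean : ε/2 ≤ ∫ ω, X ω) :
    ∃ ℓ : ℕ, 1 ≤ ℓ ∧ ℓ ≤ L + 1 ∧
      ENNReal.ofReal (2^ℓ * ε / (8 * (ℓ:ℝ)^2)) ≤ ℙ {ω | (2:ℝ)^(-(ℓ:ℤ)) ≤ X ω} :=
  stmt_15_general ε hε L hL X hX hrange hmean
end
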